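/- For every ε > 0, the function f_ε : ℝ → ℝ defined by f_ε(x) = x for x > ε and f_ε(x) = x²/(2ε) + ε/2 for x ≤ ε is convex and differentiable on ℝ, its minimum value is ε/2 (attained at x = 0), and it satisfies f_ε'(ε) = 1 while f_ε(ε) − min f_ε = ε/2. In particular, the optimality gap f_ε(ε) − min f_ε tends to 0 as ε → 0 while the derivative at the same point remains equal to 1, so the optimality gap cannot bound the Karush–Kuhn–Tucker error. -/

import Mathlib

open Filter Topology

noncomputable section

/-! The two pieces of `f_ε` meet at `x = ε` with value `ε` and slope `1`, so `f_ε` is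
differentiable with derivative `min (x / ε) 1`; this is monotone, hence `f_ε` is convex. The gap
`f_ε(ε) − f_ε(0) = ε − ε/2` vanishes with `ε` while the slope at `ε` stays `1`. -/

def fEps (ε x : ℝ) : ℝ := if ε < x then x else x ^ 2 / (2 * ε) + ε / 2

theorem HasDerivAt.ite_lt {F : Type*} [NormedAddCommGroup F] [NormedSpace ℝ F]
    {f g : ℝ → F} {f' : F} {a : ℝ} (hf : HasDerivAt f f' a) (hg : HasDerivAt g f' a)
    (hfg : f a = g a) : HasDerivAt (fun x => if a < x then f x else g x) f' a := by
  have right : HasDerivWithinAt (fun x => if a < x then f x else g x) f' (Set.Ici a) a := by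
    refine hf.hasDerivWithinAt.congr (fun x hx => ?_) (by simp [hfg])
    rcases (Set.mem_Ici.mp hx).lt_or_eq with h | rfl
    · simp [h]
    · simp [hfg]
  have left : HasDerivWithinAt (fun x => if a < x then f x else g x) f' (Set.Iic a) a :=
    hg.hasDerivWithinAt.congr (fun x hx => by simp [not_lt.mpr (Set.mem_Iic.mp hx)])
      (by simp)
  simpa [Set.Iic_union_Ici] using left.union right

theorem fEps_hasDerivAt {ε : ℝ} (hε : 0 < ε) (x : ℝ) :
    HasDerivAt (fEps ε) (min (x / ε) 1) x := by
  have hquad : ∀ y, HasDerivAt (fun z : ℝ => z ^ 2 / (2 * ε) + ε / 2) (y / ε) y := fun y => by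
    refine (((hasDerivAt_pow 2 y).div_const (2 * ε)).add_const (ε / 2)).congr_deriv ?_
    field_simp
    norm_num
  rcases lt_trichotomy x ε with hx | rfl | hx
  · rw [min_eq_left ((div_le_one hε).mpr hx.le)]
    refine (hquad x).congr_of_eventuallyEq ?_
    filter_upwards [eventually_lt_nhds hx] with z hz
    simp [fEps, not_lt.mpr hz.le]
  · rw [div_self hε.ne', min_self]
    refine (hasDerivAt_id x).ite_lt ?_ ?_
    · simpa [div_self hε.ne'] using hquad x
    · simp only [id]
      field_simp
      ring
  · rw [min_eq_right ((one_le_div hε).mpr hx.le)]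
    refine (hasDerivAt_id x).congr_of_eventuallyEq ?_
    filter_upwards [eventually_gt_nhds hx] with z hz
    simp [fEps, hz]

theorem fEps_zero {ε : ℝ} (hε : 0 ≤ ε) : fEps ε 0 = ε / 2 := by
  simp [fEps, not_lt.mpr hε]

theorem fEps_self (ε : ℝ) : fEps ε ε = ε := by
  rcases eq_or_ne ε 0 with rfl | hε
  · simp [fEps]
  · simp only [fEps, lt_irrefl, if_false]
    field_simp
    ring

theorem fEps_zero_le {ε : ℝ} (hε : 0 < ε) (x : ℝ) : fEps ε 0 ≤ fEps ε x := by
  rw [fEps_zero hε.le, fEps]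
  split_ifs with hx
  · linarith
  · have : 0 ≤ x ^ 2 / (2 * ε) := by positivity
    linarith

theorem convexOn_fEps {ε : ℝ} (hε : 0 < ε) : ConvexOn ℝ Set.univ (fEps ε) := by
  refine Monotone.convexOn_univ_of_deriv (fun x => (fEps_hasDerivAt hε x).differentiableAt) ?_
  intro a b hab
  simp only [(fEps_hasDerivAt hε _).deriv]
  gcongr

/-- counterexample: the optimality gap cannot bound the KKT error.
For every `ε > 0`, `f_ε` is convex and differentiable on `ℝ`, its minimum value is `ε/2`
(attained at `x = 0`), `f_ε'(ε) = 1` and `f_ε(ε) − min f_ε = ε/2`.  In particular, the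
optimality gap `f_ε(ε) − min f_ε` tends to `0` as `ε → 0⁺` while the derivative at that
point is always `1`. -/
theorem optimality_gap_cannot_bound_KKT :
    (∀ ε : ℝ, 0 < ε →
      ConvexOn ℝ Set.univ (fEps ε) ∧
      Differentiable ℝ (fEps ε) ∧
      (∀ x : ℝ, fEps ε 0 ≤ fEps ε x) ∧
      fEps ε 0 = ε / 2 ∧
      deriv (fEps ε) ε = 1 ∧
      fEps ε ε - fEps ε 0 = ε / 2) ∧
    Tendsto (fun ε : ℝ => fEps ε ε - fEps ε 0) (𝓝[>] 0) (𝓝 0) := by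
  have gap : ∀ ε : ℝ, 0 ≤ ε → fEps ε ε - fEps ε 0 = ε / 2 := fun ε hε => by
    rw [fEps_self, fEps_zero hε]
    ring
  refine ⟨fun ε hε => ⟨convexOn_fEps hε, fun x => (fEps_hasDerivAt hε x).differentiableAt,
    fEps_zero_le hε, fEps_zero hε.le, ?_, gap ε hε.le⟩, ?_⟩
  · rw [(fEps_hasDerivAt hε ε).deriv, div_self hε.ne', min_self]
  · have half : Tendsto (fun ε : ℝ => ε / 2) (𝓝[>] 0) (𝓝 0) := by
      simpa using (tendsto_id.div_const (2 : ℝ)).mono_left (nhdsWithin_le_nhds (a := (0 : ℝ)))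
    refine half.congr' ?_
    filter_upwards [self_mem_nhdsWithin] with ε hε
    exact (gap ε (le_of_lt hε)).symm
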